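/- arXiv:2201.13187 — 2 statements merged into one kernel-verified Lean document; each statement's English description precedes it below -/
import Mathlib

section
/- Let (A, B, E, E') be a C*-operator-valued infinitesimal probability space, let x = x* ∈ A, and set X = [[x, 0], [0, x]] ∈ Ã. Then for all b, c ∈ B with (‖b‖ + ‖c‖)·‖x‖ < 1, the element I − X [[b, c], [0, b]] is invertible in Ã and ϱ_X([[b, c], [0, b]]) := Ẽ(X [[b, c], [0, b]] (I − X [[b, c], [0, b]])⁻¹) = [[ϱ_x(b), (Dϱ_x)(b)(c) + ∂ϱ_x(b)], [0, ϱ_x(b)]], where Dϱ_x is the Fréchet derivative of ϱ_x and ∂ϱ_x(b) = E'(xb(1 − xb)⁻¹). -/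
/-
With `z = x b`, `v = x c` and `W = (1 - z)⁻¹`, the element `X [[b, c], [0, b]]` is
`[[z, v], [0, z]]`, and in the square-zero extension `1 - [[z, v], [0, z]]` is invertible with
inverse `[[W, W v W], [0, W]]`. Both sides of the identity are evaluated through
`y (1 - y)⁻¹ = (1 - y)⁻¹ - 1`: the off-diagonal entry of `Ẽ` is then `E'(W - 1) + E(W v W)`,
and `E(W v W)` is the derivative of `b ↦ E((1 - x b)⁻¹ - 1)` in the direction `c`.
-/

open scoped BigOperators

variable {A B : Type*} [CStarAlgebra A] [CStarAlgebra B]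

/-- `(A, B, E, E')` is a C*-operator-valued infinitesimal probability space, where the unital
C*-subalgebra `B ⊆ A` is realized via the isometric unital star-algebra embedding `ι : B → A`:
`E` is a bounded, completely positive, `B`-`B`-bimodule linear map with `E 1 = 1`, and `E'` is a
bounded, selfadjoint, `B`-`B`-bimodule linear map with `E' 1 = 0`. -/
structure IsCStarOVIProbSpace (ι : B →⋆ₐ[ℂ] A) (E E' : A →L[ℂ] B) : Prop where
  isometry : Isometry ι
  E_one : E 1 = 1
  E_bimod : ∀ (b₁ b₂ : B) (a : A), E (ι b₁ * a * ι b₂) = b₁ * E a * b₂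
  E_cp : ∀ (n : ℕ) (M : Matrix (Fin n) (Fin n) A),
      (∃ N : Matrix (Fin n) (Fin n) A, M = star N * N) →
      ∃ N' : Matrix (Fin n) (Fin n) B, M.map ⇑E = star N' * N'
  E'_one : E' 1 = 0
  E'_selfadj : ∀ a : A, E' (star a) = star (E' a)
  E'_bimod : ∀ (b₁ b₂ : B) (a : A), E' (ι b₁ * a * ι b₂) = b₁ * E' a * b₂

/-- `ϱ_z(b) = E(zb(1 − zb)⁻¹)`. -/
noncomputable def varrhoT (ι : B →⋆ₐ[ℂ] A) (E : A →L[ℂ] B) (z : A) (b : B) : B :=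
  E (z * ι b * Ring.inverse (1 - z * ι b))

/-- The ρ-transform `ρ_z(b) = ϱ_z(b)(1 + ϱ_z(b))⁻¹`. -/
noncomputable def rhoT (ι : B →⋆ₐ[ℂ] A) (E : A →L[ℂ] B) (z : A) (b : B) : B :=
  varrhoT ι E z b * Ring.inverse (1 + varrhoT ι E z b)

/-- `∂ϱ_z(b) = E'(zb(1 − zb)⁻¹)`. -/
noncomputable def dvarrhoT (ι : B →⋆ₐ[ℂ] A) (E' : A →L[ℂ] B) (z : A) (b : B) : B :=
  E' (z * ι b * Ring.inverse (1 - z * ι b))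

/-- The infinitesimal ρ-transform `∂ρ_z(b) = (1 + ϱ_z(b))⁻¹ ∂ϱ_z(b) (1 + ϱ_z(b))⁻¹`. -/
noncomputable def drhoT (ι : B →⋆ₐ[ℂ] A) (E E' : A →L[ℂ] B) (z : A) (b : B) : B :=
  Ring.inverse (1 + varrhoT ι E z b) * dvarrhoT ι E' z b * Ring.inverse (1 + varrhoT ι E z b)

open TrivSqZeroExt

/-- The map `Ẽ : Ã → B̃`, `[[a, a'], [0, a]] ↦ [[E a, E' a + E a'], [0, E a]]`, where the upper
triangular algebra `Ã` (of matrices `[[a, a'], [0, a]]`) is realized as the trivial square-zero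
extension `TrivSqZeroExt A A`. -/
noncomputable def tildeE (E E' : A →L[ℂ] B) (p : TrivSqZeroExt A A) : TrivSqZeroExt B B :=
  inl (E p.fst) + inr (E' p.fst + E p.snd)

/-- The embedding of `B̃` into `Ã` induced by `ι`. -/
noncomputable def tildeIota (ι : B →⋆ₐ[ℂ] A) (p : TrivSqZeroExt B B) : TrivSqZeroExt A A :=
  inl (ι p.fst) + inr (ι p.snd)


open ContinuousLinearMap

theorem mul_inverse_one_sub {R : Type*} [Ring R] {z : R} (hz : IsUnit (1 - z)) :
    z * Ring.inverse (1 - z) = Ring.inverse (1 - z) - 1 := by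
  have h := Ring.mul_inverse_cancel _ hz
  rw [sub_mul, one_mul] at h
  calc z * Ring.inverse (1 - z)
      = Ring.inverse (1 - z) - (Ring.inverse (1 - z) - z * Ring.inverse (1 - z)) := by abel
    _ = Ring.inverse (1 - z) - 1 := by rw [h]

namespace TrivSqZeroExt

open scoped RightActions

variable {R M : Type*} [Ring R] [AddCommGroup M] [Module R M] [Module Rᵐᵒᵖ M]
  [SMulCommClass R Rᵐᵒᵖ M]

theorem fst_ringInverse {x : TrivSqZeroExt R M} (hx : IsUnit x.fst) :
    (Ring.inverse x).fst = Ring.inverse x.fst := by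
  obtain ⟨_⟩ := hx.nonempty_invertible
  let := invertibleOfInvertibleFst x
  rw [Ring.inverse_invertible, Ring.inverse_invertible, fst_invOf]

theorem snd_ringInverse {x : TrivSqZeroExt R M} (hx : IsUnit x.fst) :
    (Ring.inverse x).snd = -(Ring.inverse x.fst •> x.snd <• Ring.inverse x.fst) := by
  obtain ⟨_⟩ := hx.nonempty_invertible
  let := invertibleOfInvertibleFst x
  rw [Ring.inverse_invertible, Ring.inverse_invertible, snd_invOf]

end TrivSqZeroExt

theorem hasFDerivAt_mul_inverse_one_sub {𝕜 R : Type*} [NontriviallyNormedField 𝕜] [NormedRing R]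
    [HasSummableGeomSeries R] [NormedAlgebra 𝕜 R] {z : R} (hz : IsUnit (1 - z)) :
    HasFDerivAt (fun y => y * Ring.inverse (1 - y))
      (mulLeftRight 𝕜 R (Ring.inverse (1 - z)) (Ring.inverse (1 - z))) z := by
  have hinv : HasFDerivAt (fun y : R => Ring.inverse (1 - y) - 1)
      (mulLeftRight 𝕜 R (Ring.inverse (1 - z)) (Ring.inverse (1 - z))) z := by
    obtain ⟨u, hu⟩ := hz
    have h := hasFDerivAt_ringInverse (𝕜 := 𝕜) u
    rw [← Ring.inverse_unit, hu] at h
    refine ((h.comp z ((hasFDerivAt_id z).const_sub 1)).sub_const 1).congr_fderiv ?_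
    ext t
    simp
  have hunits : ∀ᶠ y in nhds z, IsUnit (1 - y) :=
    (continuous_const.sub continuous_id).continuousAt.eventually (Units.isOpen.mem_nhds hz)
  refine hinv.congr_of_eventuallyEq ?_
  filter_upwards [hunits] with y hy using mul_inverse_one_sub hy

open scoped CStarAlgebra in
noncomputable def StarAlgHom.toContinuousLinearMap (φ : A →⋆ₐ[ℂ] B) : A →L[ℂ] B :=
  ⟨φ.toAlgHom.toLinearMap, map_continuous φ⟩

@[simp]
theorem StarAlgHom.toContinuousLinearMap_apply (φ : A →⋆ₐ[ℂ] B) (a : A) :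
    φ.toContinuousLinearMap a = φ a :=
  rfl

theorem hasFDerivAt_varrhoT (ι : B →⋆ₐ[ℂ] A) (E : A →L[ℂ] B) (x : A) {b : B}
    (hb : IsUnit (1 - x * ι b)) :
    HasFDerivAt (varrhoT ι E x)
      (E.comp ((mulLeftRight ℂ A (Ring.inverse (1 - x * ι b)) (Ring.inverse (1 - x * ι b))).comp
        ((mul ℂ A x).comp ι.toContinuousLinearMap))) b := by
  have h := E.hasFDerivAt.comp b ((hasFDerivAt_mul_inverse_one_sub hb).comp b
    ((mul ℂ A x).comp ι.toContinuousLinearMap).hasFDerivAt)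
  exact h

theorem inl_mul_tildeIota (ι : B →⋆ₐ[ℂ] A) (x : A) (b c : B) :
    inl x * tildeIota ι (inl b + inr c) = inl (x * ι b) + inr (x * ι c) := by
  ext <;> simp [tildeIota]

theorem varrho_upper_triangular_general
    (ι : B →⋆ₐ[ℂ] A) (E E' : A →L[ℂ] B)
    (x : A) (b c : B) (hbc : (‖b‖ + ‖c‖) * ‖x‖ < 1) :
    IsUnit (1 - inl x * tildeIota ι (inl b + inr c)) ∧
    DifferentiableAt ℂ (varrhoT ι E x) b ∧
    tildeE E E' (inl x * tildeIota ι (inl b + inr c) *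
        Ring.inverse (1 - inl x * tildeIota ι (inl b + inr c))) =
      inl (varrhoT ι E x b) + inr (fderiv ℂ (varrhoT ι E x) b c + dvarrhoT ι E' x b) := by
  have hz : ‖x * ι b‖ < 1 := calc
    ‖x * ι b‖ ≤ ‖x‖ * ‖b‖ :=
      (norm_mul_le _ _).trans (by gcongr; exact NonUnitalStarAlgHom.norm_apply_le ι b)
    _ < 1 := by nlinarith [norm_nonneg x, norm_nonneg c]
  have hunit : IsUnit (1 - x * ι b) := (Units.oneSub _ hz).isUnit
  have hunitFst : IsUnit (1 - (inl (x * ι b) + inr (x * ι c)) : TrivSqZeroExt A A).fst := by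
    simpa using hunit
  have hunitY := isUnit_iff_isUnit_fst.2 hunitFst
  have hderiv := hasFDerivAt_varrhoT ι E x hunit
  refine ⟨inl_mul_tildeIota ι x b c ▸ hunitY, hderiv.differentiableAt, ?_⟩
  rw [inl_mul_tildeIota, mul_inverse_one_sub hunitY, hderiv.fderiv, varrhoT, dvarrhoT,
    mul_inverse_one_sub hunit]
  ext <;> simp only [tildeE, fst_add, snd_add, fst_inl, snd_inl, fst_inr, snd_inr, fst_sub,
    snd_sub, fst_one, snd_one, fst_ringInverse hunitFst, snd_ringInverse hunitFst] <;>
    simp [mul_assoc, add_comm]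

/-- For a C*-operator-valued infinitesimal probability space `(A, B, E, E')`, a selfadjoint
`x ∈ A` and `X = [[x, 0], [0, x]]`, for all `b, c ∈ B` with `(‖b‖ + ‖c‖)·‖x‖ < 1` the element
`I − X [[b, c], [0, b]]` is invertible in `Ã` and
`ϱ_X([[b, c], [0, b]]) = [[ϱ_x(b), (Dϱ_x)(b)(c) + ∂ϱ_x(b)], [0, ϱ_x(b)]]`. -/
theorem varrho_upper_triangular
    (ι : B →⋆ₐ[ℂ] A) (E E' : A →L[ℂ] B) (h : IsCStarOVIProbSpace ι E E')
    (x : A) (hx : star x = x) (b c : B) (hbc : (‖b‖ + ‖c‖) * ‖x‖ < 1) :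
    IsUnit (1 - inl x * tildeIota ι (inl b + inr c)) ∧
    DifferentiableAt ℂ (varrhoT ι E x) b ∧
    tildeE E E' (inl x * tildeIota ι (inl b + inr c) *
        Ring.inverse (1 - inl x * tildeIota ι (inl b + inr c))) =
      inl (varrhoT ι E x b) + inr (fderiv ℂ (varrhoT ι E x) b c + dvarrhoT ι E' x b) :=
  varrho_upper_triangular_general ι E E' x b c hbc
end

section
/- Let (A, B, E, E') be a C*-operator-valued infinitesimal probability space, let x = x* ∈ A, and set X = [[x, 0], [0, x]] ∈ Ã. Then there exists δ > 0 such that for all b, c ∈ B with ‖b‖ + ‖c‖ < δ, the elements I + ϑ_X([[b, c], [0, b]]) and 1 + ϑ_x(b) are invertible and κ_X([[b, c], [0, b]]) := (I + ϑ_X([[b, c], [0, b]]))⁻¹ ϑ_X([[b, c], [0, b]]) = [[κ_x(b), (Dκ_x)(b)(c) + ∂κ_x(b)], [0, κ_x(b)]], where Dκ_x is the Fréchet derivative of κ_x and ∂κ_x(b) = (1 + ϑ_x(b))⁻¹ ∂ϑ_x(b) (1 + ϑ_x(b))⁻¹. -/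
open scoped BigOperators

variable {A B : Type*} [CStarAlgebra A] [CStarAlgebra B]

/-- `ϑ_z(b) = E((1 − bz)⁻¹ bz)`. -/
noncomputable def thetaT (ι : B →⋆ₐ[ℂ] A) (E : A →L[ℂ] B) (z : A) (b : B) : B :=
  E (Ring.inverse (1 - ι b * z) * (ι b * z))

/-- The κ-transform `κ_z(b) = (1 + ϑ_z(b))⁻¹ ϑ_z(b)`. -/
noncomputable def kappaT (ι : B →⋆ₐ[ℂ] A) (E : A →L[ℂ] B) (z : A) (b : B) : B :=
  Ring.inverse (1 + thetaT ι E z b) * thetaT ι E z b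

/-- `∂ϑ_z(b) = E'((1 − bz)⁻¹ bz)`. -/
noncomputable def dthetaT (ι : B →⋆ₐ[ℂ] A) (E' : A →L[ℂ] B) (z : A) (b : B) : B :=
  E' (Ring.inverse (1 - ι b * z) * (ι b * z))

/-- The infinitesimal κ-transform `∂κ_z(b) = (1 + ϑ_z(b))⁻¹ ∂ϑ_z(b) (1 + ϑ_z(b))⁻¹`. -/
noncomputable def dkappaT (ι : B →⋆ₐ[ℂ] A) (E E' : A →L[ℂ] B) (z : A) (b : B) : B :=
  Ring.inverse (1 + thetaT ι E z b) * dthetaT ι E' z b * Ring.inverse (1 + thetaT ι E z b)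

open TrivSqZeroExt

/-! In the square-zero extension, `(1 + (t + sε))⁻¹ (t + sε) = (1 + t)⁻¹ t + (1 + t)⁻¹ s (1 + t)⁻¹ ε`,
and likewise `(1 - (w + vε))⁻¹ (w + vε) = (1 - w)⁻¹ w + (1 - w)⁻¹ v (1 - w)⁻¹ ε`. Applied once in `Ã`
and once in `B̃`, they show that the `ε`-part of `κ_X([[b, c], [0, b]])` is
`(1 + ϑ_x b)⁻¹ (∂ϑ_x b + E((1 - bx)⁻¹ cx (1 - bx)⁻¹)) (1 + ϑ_x b)⁻¹`. The first summand is `∂κ_x b`;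
the second is `Dκ_x(b)(c)` by the chain rule, because the derivatives of `t ↦ (1 + t)⁻¹ t` and
`w ↦ (1 - w)⁻¹ w` are the same sandwiching maps. The radius `δ` comes from the openness of the group
of units. -/

open Topology ContinuousLinearMap
open scoped RightActions

section RingInverse

variable {R : Type*} [Ring R]

theorem Ring.inverse_one_add_mul_self {t : R} (ht : IsUnit (1 + t)) :
    Ring.inverse (1 + t) * t = 1 - Ring.inverse (1 + t) := by
  rw [eq_sub_iff_add_eq, ← mul_add_one, add_comm t, Ring.inverse_mul_cancel _ ht]

theorem Ring.inverse_one_sub_mul_self {w : R} (hw : IsUnit (1 - w)) :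
    Ring.inverse (1 - w) * w = Ring.inverse (1 - w) - 1 := by
  have h := Ring.inverse_mul_cancel _ hw
  rw [mul_sub, mul_one, sub_eq_iff_eq_add] at h
  rw [eq_sub_iff_add_eq, add_comm, ← h]

end RingInverse

namespace TrivSqZeroExt

variable {R M : Type*} [Ring R] [AddCommGroup M] [Module R M] [Module Rᵐᵒᵖ M]
  [SMulCommClass R Rᵐᵒᵖ M]

theorem inverse_eq_inl_add_inr {x : TrivSqZeroExt R M} (hx : IsUnit x.fst) :
    Ring.inverse x =
      inl (Ring.inverse x.fst) + inr (-(Ring.inverse x.fst •> x.snd <• Ring.inverse x.fst)) := by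
  have hleft := mul_left_eq_one _ x (Ring.inverse_mul_cancel _ hx)
  calc Ring.inverse x = _ * x * Ring.inverse x := by rw [hleft, one_mul]
    _ = _ := by rw [mul_assoc, Ring.mul_inverse_cancel _ (isUnit_iff_isUnit_fst.2 hx), mul_one]

theorem inverse_one_add_mul_self {t : R} (s : M) (ht : IsUnit (1 + t)) :
    Ring.inverse (1 + (inl t + inr s)) * (inl t + inr s) =
      inl (Ring.inverse (1 + t) * t) + inr (Ring.inverse (1 + t) •> s <• Ring.inverse (1 + t)) := by
  have hfst : (1 + (inl t + inr s) : TrivSqZeroExt R M).fst = 1 + t := by simp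
  have hu : IsUnit (1 + (inl t + inr s) : TrivSqZeroExt R M) :=
    isUnit_iff_isUnit_fst.2 (hfst ▸ ht)
  rw [Ring.inverse_one_add_mul_self hu, Ring.inverse_one_add_mul_self ht,
    inverse_eq_inl_add_inr (hfst ▸ ht), hfst]
  ext <;> simp

theorem inverse_one_sub_mul_self {w : R} (v : M) (hw : IsUnit (1 - w)) :
    Ring.inverse (1 - (inl w + inr v)) * (inl w + inr v) =
      inl (Ring.inverse (1 - w) * w) + inr (Ring.inverse (1 - w) •> v <• Ring.inverse (1 - w)) := by
  have hfst : (1 - (inl w + inr v) : TrivSqZeroExt R M).fst = 1 - w := by simp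
  have hu : IsUnit (1 - (inl w + inr v) : TrivSqZeroExt R M) :=
    isUnit_iff_isUnit_fst.2 (hfst ▸ hw)
  rw [Ring.inverse_one_sub_mul_self hu, Ring.inverse_one_sub_mul_self hw,
    inverse_eq_inl_add_inr (hfst ▸ hw), hfst]
  ext <;> simp

end TrivSqZeroExt

section Derivative

variable {𝕜 R : Type*} [NontriviallyNormedField 𝕜] [NormedRing R] [NormedAlgebra 𝕜 R]
  [HasSummableGeomSeries R]

theorem hasFDerivAt_inverse_one_add_mul_self {t : R} (ht : IsUnit (1 + t)) :
    HasFDerivAt (fun t : R => Ring.inverse (1 + t) * t)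
      (mulLeftRight 𝕜 R (Ring.inverse (1 + t)) (Ring.inverse (1 + t))) t := by
  have hinv : HasFDerivAt (fun t : R => Ring.inverse (1 + t))
      (-mulLeftRight 𝕜 R (Ring.inverse (1 + t)) (Ring.inverse (1 + t))) t := by
    have h := (hasFDerivAt_ringInverse (𝕜 := 𝕜) ht.unit).comp t ((hasFDerivAt_id t).const_add 1)
    rw [← Ring.inverse_of_isUnit ht] at h
    exact h.congr_fderiv (by simp)
  have hnear : ∀ᶠ s in 𝓝 t, IsUnit (1 + s) :=
    (continuous_const.add continuous_id).continuousAt.eventually_mem (Units.isOpen.mem_nhds ht)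
  simpa using (hinv.const_sub 1).congr_of_eventuallyEq
    (hnear.mono fun s hs => Ring.inverse_one_add_mul_self hs)

theorem hasFDerivAt_inverse_one_sub_mul_self {w : R} (hw : IsUnit (1 - w)) :
    HasFDerivAt (fun w : R => Ring.inverse (1 - w) * w)
      (mulLeftRight 𝕜 R (Ring.inverse (1 - w)) (Ring.inverse (1 - w))) w := by
  have hinv : HasFDerivAt (fun w : R => Ring.inverse (1 - w))
      (mulLeftRight 𝕜 R (Ring.inverse (1 - w)) (Ring.inverse (1 - w))) w := by
    have h := (hasFDerivAt_ringInverse (𝕜 := 𝕜) hw.unit).comp w ((hasFDerivAt_id w).const_sub 1)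
    rw [← Ring.inverse_of_isUnit hw] at h
    exact h.congr_fderiv (by simp)
  have hnear : ∀ᶠ s in 𝓝 w, IsUnit (1 - s) :=
    (continuous_const.sub continuous_id).continuousAt.eventually_mem (Units.isOpen.mem_nhds hw)
  simpa using (hinv.sub_const 1).congr_of_eventuallyEq
    (hnear.mono fun s hs => Ring.inverse_one_sub_mul_self hs)

end Derivative

theorem hasFDerivAt_thetaT {ι : B →⋆ₐ[ℂ] A} (hι : Continuous ι) (E : A →L[ℂ] B) (x : A) {b : B}
    (hu : IsUnit (1 - ι b * x)) :
    HasFDerivAt (thetaT ι E x)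
      (E ∘L mulLeftRight ℂ A (Ring.inverse (1 - ι b * x)) (Ring.inverse (1 - ι b * x)) ∘L
        (mul ℂ A).flip x ∘L ⟨ι.toLinearMap, hι⟩) b :=
  E.hasFDerivAt.comp b ((hasFDerivAt_inverse_one_sub_mul_self hu).comp b
    ((mul ℂ A).flip x ∘L ⟨ι.toLinearMap, hι⟩).hasFDerivAt :)

theorem hasFDerivAt_kappaT {ι : B →⋆ₐ[ℂ] A} (hι : Continuous ι) (E : A →L[ℂ] B) (x : A) {b : B}
    (hu : IsUnit (1 - ι b * x)) (hθ : IsUnit (1 + thetaT ι E x b)) :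
    HasFDerivAt (kappaT ι E x)
      (mulLeftRight ℂ B (Ring.inverse (1 + thetaT ι E x b)) (Ring.inverse (1 + thetaT ι E x b)) ∘L
        E ∘L mulLeftRight ℂ A (Ring.inverse (1 - ι b * x)) (Ring.inverse (1 - ι b * x)) ∘L
        (mul ℂ A).flip x ∘L ⟨ι.toLinearMap, hι⟩) b :=
  (hasFDerivAt_inverse_one_add_mul_self hθ).comp b (hasFDerivAt_thetaT hι E x hu)

theorem eventually_isUnit_one_sub_and_one_add_thetaT {ι : B →⋆ₐ[ℂ] A} (hι : Continuous ι)
    (E : A →L[ℂ] B) (x : A) :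
    ∀ᶠ b in 𝓝 0, IsUnit (1 - ι b * x) ∧ IsUnit (1 + thetaT ι E x b) := by
  have hu₀ : IsUnit (1 - ι 0 * x) := by simp
  have hu : ContinuousAt (fun b : B => 1 - ι b * x) 0 := by fun_prop
  have hθ : ContinuousAt (fun b => 1 + thetaT ι E x b) 0 :=
    continuousAt_const.add (hasFDerivAt_thetaT hι E x hu₀).continuousAt
  exact (hu.eventually_mem (Units.isOpen.mem_nhds hu₀)).and
    (hθ.eventually_mem (Units.isOpen.mem_nhds (by simp [thetaT])))

theorem tildeIota_inl_add_inr_mul_inl (ι : B →⋆ₐ[ℂ] A) (b c : B) (x : A) :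
    tildeIota ι (inl b + inr c) * inl x = inl (ι b * x) + inr (ι c * x) := by
  ext <;> simp [tildeIota]

theorem tildeE_inl_add_inr (E E' : A →L[ℂ] B) (a a' : A) :
    tildeE E E' (inl a + inr a') = inl (E a) + inr (E' a + E a') := by
  simp [tildeE]

theorem kappa_upper_triangular_general
    (ι : B →⋆ₐ[ℂ] A) (E E' : A →L[ℂ] B) (h : IsCStarOVIProbSpace ι E E')
    (x : A) :
    ∃ δ > (0 : ℝ), ∀ b c : B, ‖b‖ + ‖c‖ < δ →
      IsUnit (1 - tildeIota ι (inl b + inr c) * inl x) ∧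
      IsUnit (1 + tildeE E E' (Ring.inverse (1 - tildeIota ι (inl b + inr c) * inl x) *
          (tildeIota ι (inl b + inr c) * inl x))) ∧
      IsUnit (1 + thetaT ι E x b) ∧
      DifferentiableAt ℂ (kappaT ι E x) b ∧
      Ring.inverse (1 + tildeE E E' (Ring.inverse (1 - tildeIota ι (inl b + inr c) * inl x) *
            (tildeIota ι (inl b + inr c) * inl x))) *
          tildeE E E' (Ring.inverse (1 - tildeIota ι (inl b + inr c) * inl x) *
            (tildeIota ι (inl b + inr c) * inl x)) =
        inl (kappaT ι E x b) + inr (fderiv ℂ (kappaT ι E x) b c + dkappaT ι E E' x b) := by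
  have hι := h.isometry.continuous
  obtain ⟨δ, hδ, hunits⟩ :=
    Metric.eventually_nhds_iff.1 (eventually_isUnit_one_sub_and_one_add_thetaT hι E x)
  refine ⟨δ, hδ, fun b c hbc => ?_⟩
  obtain ⟨hu, hθ⟩ :=
    hunits (y := b) (by simpa using (le_add_of_nonneg_right (norm_nonneg c)).trans_lt hbc)
  have hκ := hasFDerivAt_kappaT hι E x hu hθ
  rw [tildeIota_inl_add_inr_mul_inl, TrivSqZeroExt.inverse_one_sub_mul_self _ hu,
    tildeE_inl_add_inr, ← thetaT, ← dthetaT, TrivSqZeroExt.inverse_one_add_mul_self _ hθ,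
    hκ.fderiv]
  refine ⟨?_, ?_, hθ, hκ.differentiableAt, ?_⟩
  · simpa [isUnit_iff_isUnit_fst] using hu
  · simpa [isUnit_iff_isUnit_fst] using hθ
  · congr 2
    simp only [comp_apply, mulLeftRight_apply, flip_apply, mul_apply', smul_eq_mul, op_smul_eq_mul]
    rw [dkappaT, mul_add, add_mul, add_comm]
    rfl

/-- For a C*-operator-valued infinitesimal probability space `(A, B, E, E')`, a selfadjoint
`x ∈ A` and `X = [[x, 0], [0, x]]`, there is `δ > 0` such that for all `b, c ∈ B` with
`‖b‖ + ‖c‖ < δ` the elements `I + ϑ_X([[b, c], [0, b]])` and `1 + ϑ_x(b)` are invertible and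
`κ_X([[b, c], [0, b]]) = [[κ_x(b), (Dκ_x)(b)(c) + ∂κ_x(b)], [0, κ_x(b)]]`. -/
theorem kappa_upper_triangular
    (ι : B →⋆ₐ[ℂ] A) (E E' : A →L[ℂ] B) (h : IsCStarOVIProbSpace ι E E')
    (x : A) (hx : star x = x) :
    ∃ δ > (0 : ℝ), ∀ b c : B, ‖b‖ + ‖c‖ < δ →
      IsUnit (1 - tildeIota ι (inl b + inr c) * inl x) ∧
      IsUnit (1 + tildeE E E' (Ring.inverse (1 - tildeIota ι (inl b + inr c) * inl x) *
          (tildeIota ι (inl b + inr c) * inl x))) ∧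
      IsUnit (1 + thetaT ι E x b) ∧
      DifferentiableAt ℂ (kappaT ι E x) b ∧
      Ring.inverse (1 + tildeE E E' (Ring.inverse (1 - tildeIota ι (inl b + inr c) * inl x) *
            (tildeIota ι (inl b + inr c) * inl x))) *
          tildeE E E' (Ring.inverse (1 - tildeIota ι (inl b + inr c) * inl x) *
            (tildeIota ι (inl b + inr c) * inl x)) =
        inl (kappaT ι E x b) + inr (fderiv ℂ (kappaT ι E x) b c + dkappaT ι E E' x b) :=
  kappa_upper_triangular_general ι E E' h x
end
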